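/- arXiv:1502.07674 — 3 statements merged into one kernel-verified Lean document; each statement's English description precedes it below -/
import Mathlib

section
/- Let σ be an n-cycle and π an arbitrary permutation of [n], let D = σ ∘ π⁻¹, let σ' be the n-cycle obtained from σ by interchanging two (not necessarily adjacent) blocks of its cycle listing, and let τ = D⁻¹ ∘ σ'. Then C(π) - C(τ) ∈ {-2, 0, 2}. -/
/-- Number of cycles (orbits, including fixed points) of a permutation. -/
def cycleCount {α : Type*} [Fintype α] [DecidableEq α] (σ : Equiv.Perm α) : ℕ :=
  Fintype.card α - σ.cycleType.sum + σ.cycleType.card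

/-!
Since `σ' = (s_i s_k) (s_{j+1} s_{l+1}) σ`, conjugating the two transpositions past `σ` gives
`τ = π (x y) (z w)` with `x ≠ y` and `z ≠ w`. Multiplying by a transposition changes the number of
cycles by exactly one: the orbits of `g (x y)` are those of `g` with at most one pair glued or one
orbit cut in two, so the count moves by at most one; and the sign, which is `(-1) ^ (n + C(g))`,
flips, so the count cannot stay the same.
-/

namespace Equiv.Perm

variable {α : Type*}

theorem SameCycle.eq_of_apply_eq [Finite α] {β : Type*} {g : Perm α} {ψ : α → β}
    (hψ : ∀ a, ψ (g a) = ψ a) {a b : α} (hab : g.SameCycle a b) : ψ a = ψ b := by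
  obtain ⟨m, -, rfl⟩ := hab.exists_pow_eq'
  clear hab
  induction m with
  | zero => rfl
  | succ m ih => rw [ih, pow_succ', mul_apply, hψ]

variable [Fintype α] [DecidableEq α]

def cycleLabel (g : Perm α) (a : α) : {x // x ∉ g.support} ⊕ {c // c ∈ g.cycleFactorsFinset} :=
  if h : a ∈ g.support then .inr ⟨g.cycleOf a, cycleOf_mem_cycleFactorsFinset_iff.mpr h⟩
  else .inl ⟨a, h⟩

theorem cycleLabel_eq_cycleLabel_iff (g : Perm α) (a b : α) :
    g.cycleLabel a = g.cycleLabel b ↔ g.SameCycle a b := by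
  by_cases ha : a ∈ g.support <;> by_cases hb : b ∈ g.support <;>
    simp only [cycleLabel, ha, hb, dite_true, dite_false, reduceCtorEq, false_iff,
      Sum.inl.injEq, Sum.inr.injEq, Subtype.mk.injEq]
  · exact (sameCycle_iff_cycleOf_eq_of_mem_support ha hb).symm
  · exact fun h => hb (h.mem_support_iff.mp ha)
  · exact fun h => ha (h.mem_support_iff.mpr hb)
  · exact ⟨fun h => h ▸ SameCycle.refl g a,
      fun h => h.eq_of_left (notMem_support.mp ha)⟩

theorem cycleLabel_surjective (g : Perm α) : Function.Surjective g.cycleLabel := by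
  rintro (⟨x, hx⟩ | ⟨c, hc⟩)
  · exact ⟨x, by simp [cycleLabel, hx]⟩
  · obtain ⟨x, hx⟩ := (mem_cycleFactorsFinset_iff.mp hc).1.nonempty_support
    refine ⟨x, ?_⟩
    simp [cycleLabel, mem_cycleFactorsFinset_support_le hc hx, cycle_is_cycleOf hx hc]

theorem cycleCount_eq_card_quotient_sameCycle (g : Perm α) :
    cycleCount g = Nat.card (Quotient (SameCycle.setoid g)) := by
  have hker : SameCycle.setoid g = Setoid.ker g.cycleLabel :=
    Setoid.ext fun a b => (cycleLabel_eq_cycleLabel_iff g a b).symm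
  rw [hker, Nat.card_congr (Setoid.quotientKerEquivOfSurjective _ g.cycleLabel_surjective),
    Nat.card_sum, Nat.card_eq_fintype_card, Fintype.card_subtype_compl, Fintype.card_coe,
    Nat.card_eq_fintype_card, Fintype.card_coe, cycleCount, sum_cycleType, cycleType_def,
    Multiset.card_map, Finset.card_val]

theorem cycleCount_mul_swap_le (g : Perm α) (x y : α) :
    cycleCount (g * swap x y) ≤ cycleCount g + 1 := by
  set g' := g * swap x y
  let mk : α → Quotient (SameCycle.setoid g') := Quotient.mk _
  -- the `g'`-orbits, with those of `x` and `y` glued together, are unions of `g`-orbits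
  let ψ (a : α) : Quotient (SameCycle.setoid g') := if g'.SameCycle a y then mk x else mk a
  have hψ_sameCycle {a b : α} (hab : g'.SameCycle a b) : ψ a = ψ b := by
    have hiff : g'.SameCycle a y ↔ g'.SameCycle b y := ⟨hab.symm.trans, hab.trans⟩
    simp only [ψ, hiff]
    split_ifs
    · rfl
    · exact Quotient.sound hab
  have hψ_swap (a : α) : ψ (swap x y a) = ψ a := by
    have hx : ψ x = mk x := ite_self _
    have hy : ψ y = mk x := if_pos (SameCycle.refl g' y)
    rcases eq_or_ne a x with rfl | hax
    · rw [swap_apply_left, hx, hy]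
    rcases eq_or_ne a y with rfl | hay
    · rw [swap_apply_right, hx, hy]
    · rw [swap_apply_of_ne_of_ne hax hay]
  have hψ (a : α) : ψ (g a) = ψ a := by
    calc ψ (g a) = ψ (g' (swap x y a)) := by simp [g']
      _ = ψ (swap x y a) := (hψ_sameCycle (sameCycle_apply_right.mpr (SameCycle.refl g' _))).symm
      _ = ψ a := hψ_swap a
  let Ψ : Option (Quotient (SameCycle.setoid g)) → Quotient (SameCycle.setoid g') :=
    fun q => q.elim (mk y) (Quotient.lift ψ fun _ _ => SameCycle.eq_of_apply_eq hψ)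
  have hΨ : Function.Surjective Ψ := by
    rintro ⟨a⟩
    by_cases ha : g'.SameCycle a y
    · exact ⟨none, (Quotient.sound ha).symm⟩
    · exact ⟨some (Quotient.mk _ a), if_neg ha⟩
  rw [cycleCount_eq_card_quotient_sameCycle, cycleCount_eq_card_quotient_sameCycle,
    ← Finite.card_option]
  exact Nat.card_le_card_of_surjective Ψ hΨ

theorem sign_eq_neg_one_pow_card_add_cycleCount (g : Perm α) :
    sign g = (-1) ^ (Fintype.card α + cycleCount g) := by
  have hexp : Fintype.card α + cycleCount g =
      2 * (Fintype.card α - g.cycleType.sum) + (g.cycleType.sum + Multiset.card g.cycleType) := by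
    have := sum_cycleType_le g
    rw [cycleCount]
    omega
  rw [sign_of_cycleType, hexp, pow_add _ (2 * _), pow_mul, Int.units_sq, one_pow, one_mul]

theorem cycleCount_mul_swap_ne {x y : α} (hxy : x ≠ y) (g : Perm α) :
    cycleCount (g * swap x y) ≠ cycleCount g := by
  intro h
  have hsign := sign_eq_neg_one_pow_card_add_cycleCount (g * swap x y)
  rw [h, ← sign_eq_neg_one_pow_card_add_cycleCount, sign_mul, sign_swap hxy, mul_neg_one] at hsign
  exact units_ne_neg_self _ hsign.symm

theorem cycleCount_mul_swap_eq_add_one_or {x y : α} (hxy : x ≠ y) (g : Perm α) :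
    cycleCount (g * swap x y) = cycleCount g + 1 ∨
      cycleCount (g * swap x y) + 1 = cycleCount g := by
  have hle := cycleCount_mul_swap_le g x y
  have hge := cycleCount_mul_swap_le (g * swap x y) x y
  rw [mul_swap_mul_self] at hge
  have hne := cycleCount_mul_swap_ne hxy g
  omega

end Equiv.Perm

open Fin.NatCast in
theorem Fin.natCast_ne_natCast {n a b : ℕ} [NeZero n] (hab : a < b) (hba : b < a + n) :
    (a : Fin n) ≠ (b : Fin n) := by
  intro h
  have hmod : a ≡ b [MOD n] := by simpa [Fin.ext_iff, Fin.val_natCast, Nat.ModEq] using h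
  have := Nat.le_of_dvd (by omega) ((Nat.modEq_iff_dvd' hab.le).mp hmod)
  omega

open Fin.NatCast in
theorem blockInterchange_cycleCount_diff_general
    (n : ℕ) [NeZero n] (f π : Equiv.Perm (Fin n)) (i j k l : ℕ)
    (h2 : i ≤ j) (h3 : j < k) (h4 : k ≤ l) (h5 : l ≤ n - 1) :
    ((cycleCount π : ℤ) -
      (cycleCount
        (((f * finRotate n * f⁻¹) * π⁻¹)⁻¹ *
          (Equiv.swap (f (i : Fin n)) (f (k : Fin n)) *
            Equiv.swap (f ((j + 1 : ℕ) : Fin n)) (f ((l + 1 : ℕ) : Fin n)) *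
              (f * finRotate n * f⁻¹)) ) : ℤ)) ∈ ({-2, 0, 2} : Set ℤ) := by
  set σ := f * finRotate n * f⁻¹
  set a := f (i : Fin n)
  set b := f (k : Fin n)
  set c := f ((j + 1 : ℕ) : Fin n)
  set d := f ((l + 1 : ℕ) : Fin n)
  have hab : σ⁻¹ a ≠ σ⁻¹ b :=
    σ⁻¹.injective.ne (f.injective.ne (Fin.natCast_ne_natCast (by omega) (by omega)))
  have hcd : σ⁻¹ c ≠ σ⁻¹ d :=
    σ⁻¹.injective.ne (f.injective.ne (Fin.natCast_ne_natCast (by omega) (by omega)))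
  -- `D⁻¹ = π * σ⁻¹` and `σ⁻¹ * swap a b * σ = swap (σ⁻¹ a) (σ⁻¹ b)`
  have hτ : (σ * π⁻¹)⁻¹ * (Equiv.swap a b * Equiv.swap c d * σ) =
      π * Equiv.swap (σ⁻¹ a) (σ⁻¹ b) * Equiv.swap (σ⁻¹ c) (σ⁻¹ d) := by
    rw [Equiv.swap_apply_apply σ⁻¹ a b, Equiv.swap_apply_apply σ⁻¹ c d]
    group
  rw [hτ]
  have hfirst := Equiv.Perm.cycleCount_mul_swap_eq_add_one_or hab π
  have hsecond :=
    Equiv.Perm.cycleCount_mul_swap_eq_add_one_or hcd (π * Equiv.swap (σ⁻¹ a) (σ⁻¹ b))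
  simp only [Set.mem_insert_iff, Set.mem_singleton_iff]
  omega

open Fin.NatCast in
/-- Let `σ = (s_0 s_1 ⋯ s_{n-1})` be the `n`-cycle given by the listing `f`
(`s_m = f m`), i.e. `σ = f * finRotate n * f⁻¹`, let `π` be arbitrary and
`D = σ * π⁻¹`.  For indices `1 ≤ i ≤ j < k ≤ l ≤ n - 1`, the block-interchange
of the (not necessarily adjacent) blocks `[s_i, s_j]` and `[s_k, s_l]`
produces the `n`-cycle `σ' = (s_i s_k) * (s_{j+1} s_{l+1}) * σ`, and the new
vertical permutation is `τ = D⁻¹ * σ'`.  Then `C(π) - C(τ) ∈ {-2, 0, 2}`. -/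
theorem blockInterchange_cycleCount_diff
    (n : ℕ) [NeZero n] (f π : Equiv.Perm (Fin n)) (i j k l : ℕ)
    (h1 : 1 ≤ i) (h2 : i ≤ j) (h3 : j < k) (h4 : k ≤ l) (h5 : l ≤ n - 1) :
    ((cycleCount π : ℤ) -
      (cycleCount
        (((f * finRotate n * f⁻¹) * π⁻¹)⁻¹ *
          (Equiv.swap (f (i : Fin n)) (f (k : Fin n)) *
            Equiv.swap (f ((j + 1 : ℕ) : Fin n)) (f ((l + 1 : ℕ) : Fin n)) *
              (f * finRotate n * f⁻¹)) ) : ℤ)) ∈ ({-2, 0, 2} : Set ℤ) :=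
  blockInterchange_cycleCount_diff_general n f π i j k l h2 h3 h4 h5
end

section
/- For any two permutations α, γ of [n], |C(α ∘ γ) - C(γ)| ≤ n - C(α), where C denotes the number of cycles. -/
/-!
Let `P_σ f = f ∘ σ` act on functions `β → K`. A function is fixed by `P_σ` exactly when
it is constant on the cycles of `σ`, so `P_σ - 1` has nullity `C(σ)` and rank `n - C(σ)`.
Since `P_{στ} - 1 = P_τ (P_σ - 1) + (P_τ - 1)`, this rank is subadditive:
`C(σ) + C(τ) ≤ n + C(στ)`. Applied to `(α, γ)` and to `(α⁻¹, αγ)`, with `C(α⁻¹) = C(α)`,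
this gives both halves of the bound.
-/

open Function Finset LinearMap Module

namespace LinearMap

variable {K V W : Type*} [DivisionRing K] [AddCommGroup V] [Module K V] [AddCommGroup W]
  [Module K W] [FiniteDimensional K W]

theorem finrank_range_add_le (f g : V →ₗ[K] W) :
    finrank K (range (f + g)) ≤ finrank K (range f) + finrank K (range g) := by
  have h := rank_add_le f g
  simp only [LinearMap.rank, ← finrank_eq_rank] at h
  exact_mod_cast h

theorem finrank_range_comp_le {V' : Type*} [AddCommGroup V'] [Module K V'] (f : V →ₗ[K] W)
    (g : W →ₗ[K] V') : finrank K (range (g ∘ₗ f)) ≤ finrank K (range f) := by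
  rw [range_comp]
  exact Submodule.finrank_map_le g _

end LinearMap

namespace Equiv.Perm

variable {β : Type*}

section Counting

variable [Fintype β] [DecidableEq β]

theorem cycleCount_eq_card_fixedPoints_add (σ : Perm β) :
    cycleCount σ = Fintype.card (fixedPoints σ) + #σ.cycleFactorsFinset := by
  rw [cycleCount, card_fixedPoints, cycleType_def, Multiset.card_map]
  rfl

theorem cycleCount_inv (σ : Perm β) : cycleCount σ⁻¹ = cycleCount σ := by
  rw [cycleCount, cycleCount, cycleType_inv]

def fixedPointOrCycle (σ : Perm β) (x : β) : fixedPoints σ ⊕ σ.cycleFactorsFinset :=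
  if h : σ x = x then .inl ⟨x, h⟩
  else .inr ⟨σ.cycleOf x, cycleOf_mem_cycleFactorsFinset_iff.2 (mem_support.2 h)⟩

theorem fixedPointOrCycle_eq_iff {σ : Perm β} {x y : β} :
    σ.fixedPointOrCycle x = σ.fixedPointOrCycle y ↔ σ.SameCycle x y := by
  by_cases hx : σ x = x <;> by_cases hy : σ y = y <;>
    simp only [fixedPointOrCycle, hx, hy, dite_true, dite_false, reduceCtorEq, false_iff,
      Sum.inl.injEq, Sum.inr.injEq, Subtype.mk_eq_mk]
  · exact ⟨fun h ↦ by cases h; rfl, fun h ↦ by cases h.eq_of_left hx; rfl⟩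
  · exact fun h ↦ hy (h.apply_eq_self_iff.1 hx)
  · exact fun h ↦ hx (h.apply_eq_self_iff.2 hy)
  · exact (sameCycle_iff_cycleOf_eq_of_mem_support (mem_support.2 hx) (mem_support.2 hy)).symm

theorem fixedPointOrCycle_surjective (σ : Perm β) : Surjective σ.fixedPointOrCycle := by
  rintro (⟨x, hx⟩ | ⟨c, hc⟩)
  · exact ⟨x, by simp [fixedPointOrCycle, hx.eq]⟩
  · obtain ⟨x, hx⟩ := (mem_cycleFactorsFinset_iff.1 hc).1.nonempty_support
    have hσx : σ x ≠ x := mem_support.1 (mem_cycleFactorsFinset_support_le hc hx)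
    exact ⟨x, by simp [fixedPointOrCycle, hσx, ← cycle_is_cycleOf hx hc]⟩

theorem nat_card_quotient_sameCycle (σ : Perm β) :
    Nat.card (Quotient (SameCycle.setoid σ)) = cycleCount σ := by
  have hker : Setoid.ker σ.fixedPointOrCycle = SameCycle.setoid σ :=
    Setoid.ext fun _ _ ↦ fixedPointOrCycle_eq_iff
  rw [← hker,
    Nat.card_congr (Setoid.quotientKerEquivOfSurjective _ σ.fixedPointOrCycle_surjective),
    cycleCount_eq_card_fixedPoints_add, Nat.card_sum, Nat.card_eq_fintype_card,
    Nat.card_eq_fintype_card, Fintype.card_coe]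

end Counting

section LinearAlgebra

theorem ker_funLeft_sub_one {R : Type*} [Ring R] [Finite β] (σ : Perm β) :
    ker (funLeft R R σ - 1) = range (funLeft R R (Quotient.mk (SameCycle.setoid σ))) := by
  ext f
  constructor
  · intro hf
    have hinv : f ∘ σ = f := sub_eq_zero.1 hf
    refine ⟨Quotient.lift f fun x y (h : σ.SameCycle x y) ↦ ?_, rfl⟩
    obtain ⟨i, -, rfl⟩ := h.exists_nat_pow_eq
    rw [coe_pow]
    exact (congrFun (iterate_invariant hinv i) x).symm
  · rintro ⟨g, rfl⟩
    ext x
    simp only [LinearMap.sub_apply, Module.End.one_apply, funLeft_apply, Pi.sub_apply,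
      Pi.zero_apply, sub_eq_zero]
    exact congrArg g (Quotient.sound (sameCycle_apply_left.2 .rfl))

theorem finrank_range_funLeft_sub_one_add_cycleCount {K : Type*} [DivisionRing K] [Fintype β]
    [DecidableEq β] (σ : Perm β) :
    finrank K (range (funLeft K K σ - 1)) + cycleCount σ = Fintype.card β := by
  have hinj :=
    funLeft_injective_of_surjective K K _ (Quotient.mk_surjective (s := SameCycle.setoid σ))
  have : Fintype (Quotient (SameCycle.setoid σ)) := .ofFinite _
  rw [← finrank_fintype_fun_eq_card K, ← (funLeft K K σ - 1).finrank_range_add_finrank_ker,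
    ker_funLeft_sub_one, finrank_range_of_inj hinj, finrank_fintype_fun_eq_card,
    ← nat_card_quotient_sameCycle, Nat.card_eq_fintype_card]

theorem funLeft_mul_sub_one {R : Type*} [Ring R] (σ τ : Perm β) :
    funLeft R R ⇑(σ * τ) - 1 =
      funLeft R R τ * (funLeft R R σ - 1) + (funLeft R R τ - 1) := by
  rw [coe_mul, funLeft_comp, mul_sub, mul_one, sub_add_sub_cancel]
  rfl

theorem cycleCount_add_cycleCount_le [Fintype β] [DecidableEq β] (σ τ : Perm β) :
    cycleCount σ + cycleCount τ ≤ Fintype.card β + cycleCount (σ * τ) := by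
  have hsub :=
    finrank_range_add_le (funLeft ℚ ℚ τ ∘ₗ (funLeft ℚ ℚ σ - 1)) (funLeft ℚ ℚ τ - 1)
  have hcomp := finrank_range_comp_le (funLeft ℚ ℚ σ - 1) (funLeft ℚ ℚ τ)
  rw [← Module.End.mul_eq_comp] at hsub hcomp
  rw [← funLeft_mul_sub_one] at hsub
  have hσ := finrank_range_funLeft_sub_one_add_cycleCount (K := ℚ) σ
  have hτ := finrank_range_funLeft_sub_one_add_cycleCount (K := ℚ) τ
  have hστ := finrank_range_funLeft_sub_one_add_cycleCount (K := ℚ) (σ * τ)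
  omega

end LinearAlgebra

end Equiv.Perm

/-- For any two permutations `α, γ` of `[n]`,
`|C(α∘γ) - C(γ)| ≤ n - C(α)`. -/
theorem abs_cycleCount_diff_le (n : ℕ) (α γ : Equiv.Perm (Fin n)) :
    |(cycleCount (α * γ) : ℤ) - (cycleCount γ : ℤ)| ≤ (n : ℤ) - cycleCount α := by
  have hαγ := Equiv.Perm.cycleCount_add_cycleCount_le α γ
  have hγ := Equiv.Perm.cycleCount_add_cycleCount_le α⁻¹ (α * γ)
  rw [inv_mul_cancel_left, Equiv.Perm.cycleCount_inv] at hγ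
  rw [Fintype.card_fin] at hαγ hγ
  rw [abs_le]
  omega
end

section
/- Lower bound for transposition distance: for any sequence s on [n] and any permutation γ of {0, 1, ..., n}, the transposition distance td(s) satisfies td(s) ≥ |C(p_t · s̄ · γ) - C(γ)| / 2, where s̄ = (0 a_1 ... a_n), p_t = (n n-1 ... 1 0), and C counts cycles. -/
/-- One transposition move on sequences: swap two adjacent nonempty
contiguous blocks. -/
def TStep {α : Type*} (a b : List α) : Prop :=
  ∃ w x z u : List α, x ≠ [] ∧ z ≠ [] ∧
    a = w ++ x ++ z ++ u ∧ b = w ++ z ++ x ++ u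

/-- The minimum number of `R`-moves transforming `s` into `t`. -/
noncomputable def sortDist {α : Type*} (R : List α → List α → Prop)
    (s t : List α) : ℕ :=
  sInf {m | ∃ g : ℕ → List α, g 0 = s ∧ g m = t ∧ ∀ i < m, R (g i) (g (i + 1))}

/-!
Prepend `0` and read sequences as cycles: for `s = f 1 ⋯ f n` and `t = 1 ⋯ n`,
`formPerm (0 :: s) = f * finRotate (n + 1) * f⁻¹ = s̄` and `formPerm (0 :: t) = finRotate (n + 1)`,
which is `p_t⁻¹`. Read cyclically from the first moved block, a transposition of `a` exchanges the
last two of three blocks of the cycle `0 :: a`; this multiplies `formPerm (0 :: a)` on the right by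
a 3-cycle, a product of two swaps. Multiplying by a swap merges two cycles or splits one, so along a
shortest sorting sequence from `s` to `t` the number `C(p_t · formPerm (0 :: a) · γ)` moves by at
most 2 per step, from `C(p_t · s̄ · γ)` to `C(p_t · p_t⁻¹ · γ) = C(γ)`.
-/

open Equiv Equiv.Perm List Relation

namespace Setoid

variable {α : Type*}

def glue (r : Setoid α) (x y : α) : Setoid α where
  r a b := r a b ∨ (r a x ∧ r y b) ∨ (r a y ∧ r x b)
  iseqv := by
    obtain ⟨refl, symm, trans⟩ := r.iseqv
    exact ⟨fun a => Or.inl (refl a), by grind, by grind⟩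

theorem le_glue (r : Setoid α) (x y : α) : r ≤ r.glue x y := fun _ _ => Or.inl

theorem glue_swap_apply [DecidableEq α] (r : Setoid α) (x y a : α) :
    r.glue x y a (swap x y a) := by
  rcases eq_or_ne a x with rfl | hx
  · rw [swap_apply_left]
    exact Or.inr (Or.inl ⟨r.refl a, r.refl y⟩)
  rcases eq_or_ne a y with rfl | hy
  · rw [swap_apply_right]
    exact Or.inr (Or.inr ⟨r.refl a, r.refl x⟩)
  · rw [swap_apply_of_ne_of_ne hx hy]

theorem card_quotient_le_of_le [Finite α] {r s : Setoid α} (h : r ≤ s) :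
    Nat.card (Quotient s) ≤ Nat.card (Quotient r) :=
  Nat.card_le_card_of_surjective (map_of_le h) (Quotient.ind fun a => ⟨⟦a⟧, rfl⟩)

theorem card_quotient_le_card_quotient_glue_add_one [Finite α] (r : Setoid α) (x y : α) :
    Nat.card (Quotient r) ≤ Nat.card (Quotient (r.glue x y)) + 1 := by
  classical
  -- The map to the glued quotient only identifies the class of `y` with that of `x`.
  let merge (q : Quotient r) : Option (Quotient (r.glue x y)) :=
    if q = ⟦y⟧ then none else some (map_of_le (r.le_glue x y) q)
  have merge_injective : merge.Injective := by
    refine Quotient.ind₂ fun a b hab => ?_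
    by_cases ha : (⟦a⟧ : Quotient r) = ⟦y⟧ <;> by_cases hb : (⟦b⟧ : Quotient r) = ⟦y⟧
    · rw [ha, hb]
    all_goals simp only [merge, ha, hb, if_true, if_false, reduceCtorEq, Option.some_inj] at hab
    have hab : (r.glue x y) a b := Quotient.exact hab
    rw [Quotient.eq] at ha hb ⊢
    rcases hab with h | ⟨_, h⟩ | ⟨h, _⟩
    · exact h
    · exact absurd (r.symm h) hb
    · exact absurd h ha
  rw [← Finite.card_option]
  exact Nat.card_le_card_of_injective merge merge_injective

end Setoid

namespace Equiv.Perm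

variable {α : Type*} [Fintype α] [DecidableEq α]

def fixedPointOrCycleOf (σ : Perm α) (a : α) : Function.fixedPoints σ ⊕ σ.cycleFactorsFinset :=
  if h : σ a = a then .inl ⟨a, h⟩
  else .inr ⟨σ.cycleOf a, cycleOf_mem_cycleFactorsFinset_iff.mpr (mem_support.mpr h)⟩

theorem fixedPointOrCycleOf_eq_iff (σ : Perm α) (a b : α) :
    σ.fixedPointOrCycleOf a = σ.fixedPointOrCycleOf b ↔ σ.SameCycle a b := by
  constructor
  · intro h
    by_cases ha : σ a = a <;> by_cases hb : σ b = b <;>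
      simp only [fixedPointOrCycleOf, ha, hb, dite_true, dite_false, reduceCtorEq, Sum.inl.injEq,
        Sum.inr.injEq, Subtype.mk.injEq] at h
    · rw [show a = b from congrArg Subtype.val h]
    · have hb' : b ∈ (σ.cycleOf a).support := by
        rw [h, mem_support_cycleOf_iff]
        exact ⟨SameCycle.rfl, mem_support.mpr hb⟩
      exact (mem_support_cycleOf_iff.mp hb').1
  · intro h
    by_cases ha : σ a = a
    · obtain rfl := h.eq_of_left ha
      rfl
    · have hb : σ b ≠ b := fun hb => ha (h.apply_eq_self_iff.mpr hb)
      simp only [fixedPointOrCycleOf, ha, hb, dite_false, h.cycleOf_eq]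

theorem fixedPointOrCycleOf_surjective (σ : Perm α) :
    Function.Surjective σ.fixedPointOrCycleOf := by
  rintro (⟨a, ha⟩ | ⟨c, hc⟩)
  · exact ⟨a, by simp only [fixedPointOrCycleOf, show σ a = a from ha, dite_true]⟩
  · obtain ⟨a, ha⟩ := (mem_cycleFactorsFinset_iff.mp hc).1.nonempty_support
    have ha' : σ a ≠ a := mem_support.mp (mem_cycleFactorsFinset_support_le hc ha)
    exact ⟨a, by simp only [fixedPointOrCycleOf, ha', dite_false, ← cycle_is_cycleOf ha hc]⟩

theorem sameCycle_setoid_swap_mul_le_glue (σ : Perm α) (x y : α) :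
    SameCycle.setoid (swap x y * σ) ≤ (SameCycle.setoid σ).glue x y := by
  intro a b h
  obtain ⟨n, -, rfl⟩ := SameCycle.exists_pow_eq' h
  clear h
  induction n with
  | zero => exact Setoid.le_glue _ x y (SameCycle.refl σ a)
  | succ n ih =>
    rw [pow_succ', mul_apply, mul_apply]
    set c := ((swap x y * σ) ^ n) a
    have hσ : σ.SameCycle c (σ c) := ⟨1, rfl⟩
    exact Setoid.trans' _ ih
      (Setoid.trans' _ (Setoid.le_glue _ x y hσ) (Setoid.glue_swap_apply _ x y (σ c)))

end Equiv.Perm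

section CycleCount

variable {α : Type*} [Fintype α] [DecidableEq α]

theorem cycleCount_eq_card_quotient (σ : Perm α) :
    cycleCount σ = Nat.card (Quotient (SameCycle.setoid σ)) := by
  let e : Quotient (SameCycle.setoid σ) ≃ Function.fixedPoints σ ⊕ σ.cycleFactorsFinset :=
    Equiv.ofBijective
      (Quotient.lift σ.fixedPointOrCycleOf fun a b h => (σ.fixedPointOrCycleOf_eq_iff a b).mpr h)
      ⟨Quotient.ind₂ fun a b h => Quotient.sound ((σ.fixedPointOrCycleOf_eq_iff a b).mp h),
        fun s => (σ.fixedPointOrCycleOf_surjective s).imp' (⟦·⟧) fun _ => id⟩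
  rw [Nat.card_congr e, Nat.card_sum, Nat.card_eq_fintype_card, card_fixedPoints,
    Nat.card_eq_fintype_card, Fintype.card_coe, cycleCount, cycleType_def, Multiset.card_map]
  rfl

theorem cycleCount_conj (σ τ : Perm α) : cycleCount (τ * σ * τ⁻¹) = cycleCount σ := by
  simp only [cycleCount, cycleType_conj]

theorem cycleCount_mul_comm (σ τ : Perm α) : cycleCount (σ * τ) = cycleCount (τ * σ) := by
  rw [← cycleCount_conj (σ * τ) τ]
  group

theorem cycleCount_le_cycleCount_swap_mul_add_one (σ : Perm α) (x y : α) :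
    cycleCount σ ≤ cycleCount (swap x y * σ) + 1 := by
  rw [cycleCount_eq_card_quotient, cycleCount_eq_card_quotient]
  exact (Setoid.card_quotient_le_card_quotient_glue_add_one _ x y).trans
    (Nat.add_le_add_right (Setoid.card_quotient_le_of_le
      (σ.sameCycle_setoid_swap_mul_le_glue x y)) 1)

theorem abs_cycleCount_mul_swap_sub_le_one (σ : Perm α) (x y : α) :
    |(cycleCount (σ * swap x y) : ℤ) - cycleCount σ| ≤ 1 := by
  have h₁ := cycleCount_le_cycleCount_swap_mul_add_one σ x y
  have h₂ := cycleCount_le_cycleCount_swap_mul_add_one (swap x y * σ) x y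
  rw [swap_mul_self_mul] at h₂
  rw [cycleCount_mul_comm, abs_le]
  constructor <;> omega

theorem abs_cycleCount_mul_swap_mul_swap_sub_le_two (σ : Perm α) (p q r s : α) :
    |(cycleCount (σ * swap p q * swap r s) : ℤ) - cycleCount σ| ≤ 2 := by
  have h₁ := abs_cycleCount_mul_swap_sub_le_one (σ * swap p q) r s
  have h₂ := abs_cycleCount_mul_swap_sub_le_one σ p q
  rw [abs_le] at *
  constructor <;> linarith

end CycleCount

namespace List
variable {α : Type*}

theorem pair_getLast_head_infix {l l' : List α} (hl : l ≠ []) (hl' : l' ≠ []) :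
    [l.getLast hl, l'.head hl'] <:+: l ++ l' := by
  refine ⟨l.dropLast, l'.tail, ?_⟩
  conv_rhs => rw [← dropLast_append_getLast hl, ← cons_head_tail hl']
  simp

theorem exists_pair_infix_of_ne_getLast {l : List α} {a : α} (ha : a ∈ l)
    (h : a ≠ l.getLast (ne_nil_of_mem ha)) : ∃ b, [a, b] <:+: l := by
  induction l with
  | nil => simp at ha
  | cons c l ih =>
    have hl : l ≠ [] := by
      rintro rfl
      exact h (mem_singleton.mp ha)
    obtain ⟨d, l, rfl⟩ := exists_cons_of_ne_nil hl
    rcases mem_cons.mp ha with rfl | ha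
    · exact ⟨d, [], l, by simp⟩
    · obtain ⟨b, hb⟩ := ih ha (by simpa using h)
      exact ⟨b, infix_cons hb⟩

variable [DecidableEq α]

theorem formPerm_apply_of_pair_infix {l : List α} (hl : l.Nodup) {a b : α}
    (h : [a, b] <:+: l) : formPerm l a = b := by
  obtain ⟨s, t, rfl⟩ := h
  have := formPerm_apply_lt_getElem _ hl s.length (by simp)
  simpa [getElem_append_right] using this

theorem formPerm_apply_getLast_eq_head (l : List α) (h : l ≠ []) :
    formPerm l (l.getLast h) = l.head h := by
  obtain ⟨a, l, rfl⟩ := exists_cons_of_ne_nil h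
  exact formPerm_apply_getLast a l

theorem formPerm_swap_blocks {X Y Z : List α} (hX : X ≠ []) (hY : Y ≠ []) (hZ : Z ≠ [])
    (hnd : (X ++ Y ++ Z).Nodup) :
    formPerm (X ++ Z ++ Y) =
      formPerm (X ++ Y ++ Z) * Equiv.swap (X.getLast hX) (Y.getLast hY) *
        Equiv.swap (Y.getLast hY) (Z.getLast hZ) := by
  set x := X.getLast hX
  set y := Y.getLast hY
  set z := Z.getLast hZ
  have hperm : X ++ Z ++ Y ~ X ++ Y ++ Z := by
    simpa only [append_assoc] using perm_append_comm.append_left X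
  have hnd' : (X ++ Z ++ Y).Nodup := hperm.nodup_iff.mpr hnd
  obtain ⟨⟨-, -, hdXY⟩, -, hdXYZ⟩ := nodup_append.mp hnd |>.imp_left nodup_append.mp
  have hxy : x ≠ y := hdXY x (getLast_mem hX) y (getLast_mem hY)
  have hxz : x ≠ z := hdXYZ x (mem_append_left _ (getLast_mem hX)) z (getLast_mem hZ)
  have hyz : y ≠ z := hdXYZ y (mem_append_right _ (getLast_mem hY)) z (getLast_mem hZ)
  have hlast : (X ++ Z ++ Y).getLast (by simp [hX]) = y := getLast_append_of_ne_nil _ hY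
  have hlast' : (X ++ Y ++ Z).getLast (by simp [hX]) = z := getLast_append_of_ne_nil _ hZ
  have hhead : (X ++ Z ++ Y).head (by simp [hX]) = X.head hX := by
    simp [head_append_of_ne_nil hX]
  have hhead' : (X ++ Y ++ Z).head (by simp [hX]) = X.head hX := by
    simp [head_append_of_ne_nil hX]
  ext v
  simp only [Equiv.Perm.coe_mul, Function.comp_apply]
  by_cases hvx : v = x
  · rw [hvx, Equiv.swap_apply_of_ne_of_ne hxy hxz, Equiv.swap_apply_left,
      formPerm_apply_of_pair_infix hnd' ((pair_getLast_head_infix hX hZ).trans ⟨[], Y, by simp⟩),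
      formPerm_apply_of_pair_infix hnd ((pair_getLast_head_infix hY hZ).trans ⟨X, [], by simp⟩)]
  by_cases hvy : v = y
  · rw [hvy, Equiv.swap_apply_left, Equiv.swap_apply_of_ne_of_ne hxz.symm hyz.symm, ← hlast,
      ← hlast', formPerm_apply_getLast_eq_head, formPerm_apply_getLast_eq_head, hhead, hhead']
  by_cases hvz : v = z
  · rw [hvz, Equiv.swap_apply_right, Equiv.swap_apply_right,
      formPerm_apply_of_pair_infix hnd' ((pair_getLast_head_infix hZ hY).trans ⟨X, [], by simp⟩),
      formPerm_apply_of_pair_infix hnd ((pair_getLast_head_infix hX hY).trans ⟨[], Z, by simp⟩)]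
  rw [Equiv.swap_apply_of_ne_of_ne hvy hvz, Equiv.swap_apply_of_ne_of_ne hvx hvy]
  have hsucc : ∀ B : List α, B <:+: X ++ Z ++ Y → B <:+: X ++ Y ++ Z → ∀ hB : B ≠ [],
      v ∈ B → v ≠ B.getLast hB → formPerm (X ++ Z ++ Y) v = formPerm (X ++ Y ++ Z) v := by
    intro B h h' hB hv hvB
    obtain ⟨w, hw⟩ := exists_pair_infix_of_ne_getLast hv hvB
    rw [formPerm_apply_of_pair_infix hnd' (hw.trans h),
      formPerm_apply_of_pair_infix hnd (hw.trans h')]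
  by_cases hv : v ∈ X ++ Y ++ Z
  · rcases mem_append.mp hv with hv | hv
    rcases mem_append.mp hv with hv | hv
    · exact hsucc X ⟨[], Z ++ Y, by simp⟩ ⟨[], Y ++ Z, by simp⟩ hX hv hvx
    · exact hsucc Y ⟨X ++ Z, [], by simp⟩ (infix_append X Y Z) hY hv hvy
    · exact hsucc Z (infix_append X Z Y) ⟨X ++ Y, [], by simp⟩ hZ hv hvz
  · rw [formPerm_apply_of_notMem hv, formPerm_apply_of_notMem (mt hperm.mem_iff.mp hv)]

theorem formPerm_map (f : Equiv.Perm α) (l : List α) :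
    formPerm (l.map f) = f * formPerm l * f⁻¹ := by
  induction l with
  | nil => simp
  | cons a l ih =>
    cases l with
    | nil => simp
    | cons b l =>
      rw [map_cons, map_cons, formPerm_cons_cons, ← map_cons, ih, formPerm_cons_cons,
        swap_apply_apply]
      group

theorem formPerm_finRange (n : ℕ) : formPerm (finRange (n + 1)) = finRotate (n + 1) := by
  ext v
  have := formPerm_apply_getElem _ (nodup_finRange (n + 1)) v (by simp [v.isLt])
  simp only [getElem_finRange, Fin.cast_mk, length_finRange] at this
  simp [this, finRotate_apply, Fin.val_add]

theorem zero_cons_ofFn_succ_eq_finRange (n : ℕ) :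
    (0 : Fin (n + 1)) :: ofFn (fun i : Fin n => Fin.ofNat (n + 1) ((i : ℕ) + 1)) =
      finRange (n + 1) := by
  rw [finRange_succ, ← ofFn_eq_map]
  congr
  ext i
  simp [Nat.mod_eq_of_lt (Nat.succ_lt_succ i.isLt)]

end List

namespace TStep

variable {β : Type*} {a b : List β}

theorem perm (h : TStep a b) : a ~ b := by
  obtain ⟨w, x, z, u, -, -, rfl, rfl⟩ := h
  simpa only [append_assoc] using (perm_append_comm.append_right u).append_left w

theorem cons (v : β) (h : TStep a b) : TStep (v :: a) (v :: b) := by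
  obtain ⟨w, x, z, u, hx, hz, rfl, rfl⟩ := h
  exact ⟨v :: w, x, z, u, hx, hz, rfl, rfl⟩

theorem exists_formPerm_cons_eq [DecidableEq β] (h : TStep a b) (v : β) (hnd : (v :: a).Nodup) :
    ∃ p q r s : β, formPerm (v :: b) = formPerm (v :: a) * swap p q * swap r s := by
  have hnd_b : (v :: b).Nodup := (h.perm.cons v).nodup_iff.mp hnd
  obtain ⟨w, x, z, u, hx, hz, rfl, rfl⟩ := h
  have hrot : v :: (w ++ x ++ z ++ u) ~r x ++ z ++ (u ++ v :: w) := by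
    convert isRotated_append (l := v :: w) (l' := x ++ z ++ u) using 1 <;> simp
  have hrot' : v :: (w ++ z ++ x ++ u) ~r x ++ (u ++ v :: w) ++ z := by
    convert isRotated_append (l := v :: w ++ z) (l' := x ++ u) using 1 <;> simp
  rw [formPerm_eq_of_isRotated hnd hrot, formPerm_eq_of_isRotated hnd_b hrot',
    formPerm_swap_blocks hx hz (by simp) (hrot.nodup_iff.mp hnd)]
  exact ⟨_, _, _, _, rfl⟩

theorem abs_cycleCount_sub_le_two [Fintype β] [DecidableEq β] (h : TStep a b) (v : β)
    (hnd : (v :: a).Nodup) (ρ γ : Perm β) :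
    |(cycleCount (ρ * formPerm (v :: b) * γ) : ℤ) - cycleCount (ρ * formPerm (v :: a) * γ)|
      ≤ 2 := by
  obtain ⟨p, q, r, s, hpqrs⟩ := h.exists_formPerm_cons_eq v hnd
  rw [hpqrs, cycleCount_mul_comm _ γ, cycleCount_mul_comm _ γ]
  simpa only [mul_assoc] using
    abs_cycleCount_mul_swap_mul_swap_sub_le_two (γ * ρ * formPerm (v :: a)) p q r s

end TStep

theorem List.Perm.reflTransGen_tStep {β : Type*} {a b : List β} (h : a ~ b) :
    ReflTransGen TStep a b := by
  induction h with
  | nil => exact .refl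
  | cons v _ ih => exact ReflTransGen.lift (v :: ·) (fun _ _ => TStep.cons v) _ _ ih
  | swap x y l => exact .single ⟨[], [y], [x], l, cons_ne_nil _ _, cons_ne_nil _ _, rfl, rfl⟩
  | trans _ _ ih₁ ih₂ => exact ih₁.trans ih₂

theorem Relation.ReflTransGen.exists_chain {β : Type*} {r : β → β → Prop} {a b : β}
    (h : ReflTransGen r a b) :
    ∃ m, ∃ g : ℕ → β, g 0 = a ∧ g m = b ∧ ∀ i < m, r (g i) (g (i + 1)) := by
  induction h with
  | refl => exact ⟨0, fun _ => a, rfl, rfl, by simp⟩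
  | @tail b c _ hbc ih =>
    obtain ⟨m, g, hg0, hgm, hg⟩ := ih
    refine ⟨m + 1, fun i => if i ≤ m then g i else c, by simp [hg0], by simp, fun i hi => ?_⟩
    rcases Nat.lt_succ_iff_lt_or_eq.mp hi with hi | rfl
    · simpa [hi.le, Nat.succ_le_of_lt hi] using hg i hi
    · simpa [hgm] using hbc

section SortDist

variable {β : Type*} {R : List β → List β → Prop} {s t : List β}

theorem exists_chain_sortDist (h : ReflTransGen R s t) :
    ∃ g : ℕ → List β, g 0 = s ∧ g (sortDist R s t) = t ∧
      ∀ i < sortDist R s t, R (g i) (g (i + 1)) :=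
  Nat.sInf_mem h.exists_chain

theorem abs_sub_le_mul_sortDist (Φ : List β → ℤ) {c : ℤ} (P : List β → Prop)
    (hP : ∀ a b, P a → R a b → P b) (hΦ : ∀ a b, P a → R a b → |Φ b - Φ a| ≤ c)
    (hs : P s) (h : ReflTransGen R s t) : |Φ t - Φ s| ≤ c * sortDist R s t := by
  obtain ⟨g, hg0, hgm, hg⟩ := exists_chain_sortDist h
  suffices H : ∀ i ≤ sortDist R s t, P (g i) ∧ |Φ (g i) - Φ s| ≤ c * i by
    simpa only [hgm] using (H _ le_rfl).2
  intro i hi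
  induction i with
  | zero => simpa [hg0] using hs
  | succ i ih =>
    obtain ⟨hPi, hΦi⟩ := ih (by omega)
    refine ⟨hP _ _ hPi (hg i hi), ?_⟩
    have := hΦ _ _ hPi (hg i hi)
    calc |Φ (g (i + 1)) - Φ s| ≤ |Φ (g (i + 1)) - Φ (g i)| + |Φ (g i) - Φ s| :=
          abs_sub_le _ _ _
      _ ≤ c * (i + 1 : ℕ) := by push_cast; linarith

end SortDist

/-- Lower bound for the transposition distance.  Encode a sequence
`s = a_1 ⋯ a_n` on `[n]` by a permutation `f` of `{0, …, n}` with `f 0 = 0`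
and `a_i = f i`, with `s̄ = (0 a_1 ⋯ a_n) = f * finRotate (n+1) * f⁻¹` and
`p_t = (n n-1 ⋯ 1 0) = (finRotate (n+1))⁻¹`.  Then for every permutation `γ`
of `{0, …, n}`, `td(s) ≥ |C(p_t · s̄ · γ) - C(γ)| / 2`. -/
theorem transposition_distance_lower_bound
    (n : ℕ) (f : Equiv.Perm (Fin (n + 1))) (hf0 : f 0 = 0)
    (γ : Equiv.Perm (Fin (n + 1))) :
    |(cycleCount ((finRotate (n + 1))⁻¹ *
          (f * finRotate (n + 1) * f⁻¹) * γ) : ℤ) - (cycleCount γ : ℤ)|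
      ≤ 2 * sortDist TStep
          (List.ofFn (fun i : Fin n => f (Fin.ofNat (n + 1) ((i : ℕ) + 1 : ℕ))))
          (List.ofFn (fun i : Fin n => (Fin.ofNat (n + 1) ((i : ℕ) + 1 : ℕ)))) := by
  set s := ofFn (fun i : Fin n => f (Fin.ofNat (n + 1) ((i : ℕ) + 1 : ℕ)))
  set t := ofFn (fun i : Fin n => (Fin.ofNat (n + 1) ((i : ℕ) + 1 : ℕ)))
  have ht : 0 :: t = finRange (n + 1) := zero_cons_ofFn_succ_eq_finRange n
  have hs : 0 :: s = (finRange (n + 1)).map f := by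
    rw [← ht, map_cons, hf0, map_ofFn]
    rfl
  have hperm : s ~ t := (by rw [hs, ht]; exact f.map_finRange_perm : 0 :: s ~ 0 :: t).cons_inv
  have key := abs_sub_le_mul_sortDist
    (fun a => (cycleCount ((finRotate (n + 1))⁻¹ * formPerm (0 :: a) * γ) : ℤ))
    (fun a => (0 :: a).Nodup)
    (fun _ _ hnd h => (h.perm.cons 0).nodup_iff.mp hnd)
    (fun _ _ hnd h => h.abs_cycleCount_sub_le_two 0 hnd _ γ)
    (by rw [hs]; exact (nodup_finRange _).map f.injective) hperm.reflTransGen_tStep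
  rw [ht, hs, formPerm_map, formPerm_finRange, inv_mul_cancel, one_mul] at key
  rwa [abs_sub_comm]
end
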